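/- Let m < M be positive integers, let A be a probability distribution on {0,1,...,m}, and let S ⊆ {1,...,M} with |S| = m. For every subset T ⊆ {1,...,M}, the Fourier coefficient of the hidden junta distribution satisfies: (i) if T ⊄ S then Ê := E_{X∼P_S^A}[χ_T(X)] = 0; (ii) if T ⊆ S with |T| = j, then E_{X∼P_S^A}[χ_T(X)] = a_j / binom(m,j), where a_j := E_{t∼A}[K_j(t;m)]. -/

import Mathlib

open Finset

/-- The Kravchuk polynomial value `K_j(x; m)`. -/
noncomputable def kravchuk (m j x : ℕ) : ℝ :=
  ∑ r ∈ Finset.range (j + 1),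
    (-1 : ℝ) ^ r * (x.choose r : ℝ) * ((m - x).choose (j - r) : ℝ)

/-- `Σ_{i ∈ S} x_i` for `x ∈ {0,1}^M`. -/
def bitSum {M : ℕ} (S : Finset (Fin M)) (x : Fin M → Bool) : ℕ :=
  (S.filter fun i => x i = true).card

/-- The hidden junta distribution `P_S^A` on `{0,1}^M`. -/
noncomputable def juntaPMF (M m : ℕ) (A : ℕ → ℝ) (S : Finset (Fin M))
    (x : Fin M → Bool) : ℝ :=
  (2 : ℝ) ^ m / (2 : ℝ) ^ M * A (bitSum S x) / (m.choose (bitSum S x) : ℝ)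

/-- The character `χ_T(x) = (−1)^{Σ_{i∈T} x_i}`. -/
noncomputable def charFn {M : ℕ} (T : Finset (Fin M)) (x : Fin M → Bool) : ℝ :=
  (-1 : ℝ) ^ (bitSum T x)

/-!
Summing `a ^ (∑_{i ∈ S} xᵢ) * b ^ (∑_{i ∈ T} xᵢ)` over the cube factors coordinatewise into
`∏ i, (1 + σᵢ τᵢ)`, with `σᵢ = a` on `S` and `τᵢ = b` on `T` (and `1` elsewhere). For `a = X`,
`b = -1` a coordinate of `T \ S` contributes the factor `0`, while for `T ⊆ S` the product is
`2 ^ (M - m) (1 - X) ^ |T| (1 + X) ^ (m - |T|)`, whose `t`-th coefficient is `K_t(|T|; m)`.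
The junta density depends on `x` only through `∑_{i ∈ S} xᵢ`, so its Fourier coefficient pairs
`A t / binom(m, t)` with these coefficients, and the symmetry
`binom(m, j) K_t(j) = binom(m, t) K_j(t)` of Kravchuk values gives the stated form.
-/

open Polynomial

theorem Nat.choose_mul_choose_sub_comm (n a b : ℕ) :
    n.choose a * (n - a).choose b = n.choose b * (n - b).choose a := by
  rcases le_or_gt (a + b) n with h | h
  · have ha := Nat.choose_mul (n := n) (Nat.le_add_right a b)
    have hb := Nat.choose_mul (n := n) (Nat.le_add_left b a)
    rw [Nat.add_sub_cancel_left] at ha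
    rw [Nat.add_sub_cancel] at hb
    rw [← ha, ← hb, Nat.choose_symm_add]
  · have hzero : ∀ a b, n < a + b → n.choose a * (n - a).choose b = 0 := fun a b h => by
      simp only [Nat.mul_eq_zero, Nat.choose_eq_zero_iff]; omega
    rw [hzero a b h, hzero b a (by omega)]

theorem Nat.choose_mul_choose_mul_choose_sub_comm {m j t r : ℕ} (hrt : r ≤ t) (hrj : r ≤ j) :
    m.choose j * (j.choose r * (m - j).choose (t - r)) =
      m.choose t * (t.choose r * (m - t).choose (j - r)) := by
  have hsub := Nat.choose_mul_choose_sub_comm (m - r) (j - r) (t - r)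
  rw [show m - r - (j - r) = m - j by omega, show m - r - (t - r) = m - t by omega] at hsub
  rw [← mul_assoc, ← mul_assoc, Nat.choose_mul hrj, Nat.choose_mul hrt, mul_assoc, mul_assoc, hsub]

theorem choose_mul_kravchuk_comm (m t j : ℕ) :
    (m.choose j : ℝ) * kravchuk m t j = m.choose t * kravchuk m j t := by
  wlog htj : t ≤ j generalizing t j
  · exact (this j t (le_of_not_ge htj)).symm
  have htrunc : kravchuk m j t =
      ∑ r ∈ range (t + 1), (-1) ^ r * (t.choose r : ℝ) * ((m - t).choose (j - r) : ℝ) := by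
    refine (sum_subset (range_subset_range.2 (by omega)) fun r _ hr => ?_).symm
    rw [Nat.choose_eq_zero_of_lt (by simpa using hr)]
    simp
  rw [htrunc, kravchuk, mul_sum, mul_sum]
  refine sum_congr rfl fun r hr => ?_
  have hrt := mem_range_succ_iff.1 hr
  have key : (m.choose j * (j.choose r * (m - j).choose (t - r)) : ℝ) =
      m.choose t * (t.choose r * (m - t).choose (j - r)) := by
    exact_mod_cast Nat.choose_mul_choose_mul_choose_sub_comm hrt (hrt.trans htj)
  linear_combination (-1 : ℝ) ^ r * key

theorem coeff_one_sub_X_pow {R : Type*} [CommRing R] (n k : ℕ) :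
    ((1 - X : R[X]) ^ n).coeff k = (-1) ^ k * n.choose k := by
  have hneg : (1 - X : R[X]) ^ n = (-1) ^ n * (X + C (-1)) ^ n := by
    rw [← mul_pow]; congr 1; simp; ring
  rw [hneg, show ((-1) ^ n : R[X]) = C ((-1) ^ n) by simp, coeff_C_mul, coeff_X_add_C_pow]
  rcases le_or_gt k n with hk | hk
  · rw [← mul_assoc, ← pow_add]; congr 1
    rw [show n + (n - k) = k + 2 * (n - k) by omega, pow_add, pow_mul]
    simp
  · simp [Nat.choose_eq_zero_of_lt hk]

theorem coeff_one_sub_X_pow_mul_one_add_X_pow_eq_kravchuk (m j t : ℕ) :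
    ((1 - X : ℝ[X]) ^ j * (1 + X) ^ (m - j)).coeff t = kravchuk m t j := by
  rw [coeff_mul, Finset.Nat.sum_antidiagonal_eq_sum_range_succ
    (fun r q => ((1 - X : ℝ[X]) ^ j).coeff r * ((1 + X : ℝ[X]) ^ (m - j)).coeff q)]
  simp only [coeff_one_sub_X_pow, coeff_one_add_X_pow, kravchuk]

theorem sum_mul_coeff_sum_X_pow_mul_C {α R : Type*} [Fintype α] [CommSemiring R] {m : ℕ}
    (k : α → ℕ) (hk : ∀ x, k x ≤ m) (c : α → R) (g : ℕ → R) :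
    ∑ t ∈ range (m + 1), g t * (∑ x, X ^ k x * C (c x)).coeff t = ∑ x, g (k x) * c x := by
  simp only [finsetSum_coeff, mul_comm (X ^ _), coeff_C_mul_X_pow,
    mul_ite, mul_zero, mul_sum]
  rw [sum_comm]
  refine sum_congr rfl fun x _ => ?_
  rw [sum_ite_eq' (range (m + 1)), if_pos (mem_range_succ_iff.2 (hk x))]

theorem prod_one_add_ite_mul_ite_of_subset {ι R : Type*} [Fintype ι] [DecidableEq ι]
    [CommSemiring R] {S T : Finset ι} (hTS : T ⊆ S) (a b : R) :
    ∏ i, (1 + (if i ∈ S then a else 1) * (if i ∈ T then b else 1)) =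
      (1 + a * b) ^ T.card * (1 + a) ^ (S.card - T.card) * 2 ^ (Fintype.card ι - S.card) := by
  have hfactor : ∀ i, 1 + (if i ∈ S then a else 1) * (if i ∈ T then b else 1) =
      if i ∈ S then (if i ∈ T then 1 + a * b else 1 + a) else 2 := by
    intro i
    by_cases hi : i ∈ S
    · by_cases hiT : i ∈ T <;> simp [hi, hiT]
    · simp [hi, show i ∉ T from fun h => hi (hTS h), one_add_one_eq_two]
  simp only [hfactor, prod_ite, prod_const, filter_mem_eq_inter, univ_inter, inter_eq_right.2 hTS]
  rw [filter_notMem_eq_sdiff, filter_notMem_eq_sdiff, card_sdiff_of_subset hTS, card_univ_sdiff]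

theorem prod_one_add_ite_mul_ite_neg_one_of_not_subset {ι R : Type*} [Fintype ι] [DecidableEq ι]
    [CommRing R] {S T : Finset ι} (hTS : ¬T ⊆ S) (a : R) :
    ∏ i, (1 + (if i ∈ S then a else 1) * (if i ∈ T then -1 else 1)) = 0 := by
  obtain ⟨i, hiT, hiS⟩ := not_subset.1 hTS
  exact prod_eq_zero (mem_univ i) (by simp [hiT, hiS])

section BitSum

variable {M : ℕ}

theorem bitSum_le_card (S : Finset (Fin M)) (x : Fin M → Bool) : bitSum S x ≤ S.card :=
  card_filter_le _ _

theorem pow_bitSum {R : Type*} [CommMonoid R] (S : Finset (Fin M)) (x : Fin M → Bool) (a : R) :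
    a ^ bitSum S x = ∏ i, if x i = true then (if i ∈ S then a else 1) else 1 := by
  rw [bitSum, ← prod_const, prod_filter, ← Fintype.prod_ite_mem]
  refine Fintype.prod_congr _ _ fun i => ?_
  split_ifs <;> rfl

theorem sum_pow_bitSum_mul_pow_bitSum {R : Type*} [CommSemiring R] (S T : Finset (Fin M))
    (a b : R) :
    ∑ x : Fin M → Bool, a ^ bitSum S x * b ^ bitSum T x =
      ∏ i, (1 + (if i ∈ S then a else 1) * (if i ∈ T then b else 1)) := by
  have hfactor : ∀ i : Fin M, 1 + (if i ∈ S then a else 1) * (if i ∈ T then b else 1) =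
      ∑ c : Bool, (if c = true then (if i ∈ S then a else 1) else 1) *
        (if c = true then (if i ∈ T then b else 1) else 1) := by
    intro i; simp [add_comm]
  simp only [hfactor, Fintype.prod_sum, pow_bitSum, prod_mul_distrib]

end BitSum

theorem sum_juntaPMF_mul_charFn_eq {M m : ℕ} {S : Finset (Fin M)} (hS : S.card = m)
    (A : ℕ → ℝ) (T : Finset (Fin M)) :
    ∑ x, juntaPMF M m A S x * charFn T x =
      2 ^ m / 2 ^ M * ∑ t ∈ range (m + 1), A t / m.choose t *
        (∏ i, (1 + (if i ∈ S then X else 1) * (if i ∈ T then -1 else 1) : ℝ[X])).coeff t := by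
  have hmonomial : ∀ x, (X : ℝ[X]) ^ bitSum S x * (-1) ^ bitSum T x =
      X ^ bitSum S x * C ((-1) ^ bitSum T x) := by simp
  rw [← sum_pow_bitSum_mul_pow_bitSum, Fintype.sum_congr _ _ hmonomial,
    sum_mul_coeff_sum_X_pow_mul_C _ (fun x => hS ▸ bitSum_le_card S x), mul_sum]
  refine Fintype.sum_congr _ _ fun x => ?_
  rw [juntaPMF, charFn]
  ring

theorem junta_fourier_coefficients_general (m M : ℕ) (A : ℕ → ℝ)
    (S : Finset (Fin M)) (hS : S.card = m) (T : Finset (Fin M)) :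
    (¬ T ⊆ S →
      ∑ x : Fin M → Bool, juntaPMF M m A S x * charFn T x = 0) ∧
    (T ⊆ S →
      ∑ x : Fin M → Bool, juntaPMF M m A S x * charFn T x =
        (∑ t ∈ Finset.range (m + 1), A t * kravchuk m T.card t) /
          (m.choose T.card : ℝ)) := by
  rw [sum_juntaPMF_mul_charFn_eq hS]
  refine ⟨fun hTS => ?_, fun hTS => ?_⟩
  · rw [prod_one_add_ite_mul_ite_neg_one_of_not_subset hTS]
    simp
  have hmM : m ≤ M := hS ▸ (card_le_univ S).trans_eq (Fintype.card_fin M)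
  have hjm : T.card ≤ m := hS ▸ card_le_card hTS
  rw [prod_one_add_ite_mul_ite_of_subset hTS, Fintype.card_fin, hS, mul_neg_one, ← sub_eq_add_neg,
    show (2 : ℝ[X]) ^ (M - m) = C (2 ^ (M - m)) by rw [map_pow, map_ofNat], sum_div, mul_sum]
  refine sum_congr rfl fun t ht => ?_
  have hsymm := choose_mul_kravchuk_comm m t T.card
  rw [coeff_mul_C, coeff_one_sub_X_pow_mul_one_add_X_pow_eq_kravchuk]
  have hct : (m.choose t : ℝ) ≠ 0 := by
    exact_mod_cast (Nat.choose_pos (mem_range_succ_iff.1 ht)).ne'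
  have hcj : (m.choose T.card : ℝ) ≠ 0 := by exact_mod_cast (Nat.choose_pos hjm).ne'
  have hpow : (2 : ℝ) ^ m * 2 ^ (M - m) = 2 ^ M := by rw [← pow_add, Nat.add_sub_cancel' hmM]
  field_simp
  linear_combination (2 ^ m * 2 ^ (M - m) * A t) * hsymm +
    (A t * m.choose t * kravchuk m T.card t) * hpow

/-- Fourier coefficients of the hidden junta distribution:
they vanish off `S`, and on subsets `T ⊆ S` of size `j` they equal
`E_{t∼A}[K_j(t;m)] / binom(m, j)`. -/
theorem junta_fourier_coefficients (m M : ℕ) (hm : 0 < m) (hmM : m < M)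
    (A : ℕ → ℝ) (hA0 : ∀ x, 0 ≤ A x) (hAsupp : ∀ x, m < x → A x = 0)
    (hA1 : ∑ x ∈ Finset.range (m + 1), A x = 1)
    (S : Finset (Fin M)) (hS : S.card = m) (T : Finset (Fin M)) :
    (¬ T ⊆ S →
      ∑ x : Fin M → Bool, juntaPMF M m A S x * charFn T x = 0) ∧
    (T ⊆ S →
      ∑ x : Fin M → Bool, juntaPMF M m A S x * charFn T x =
        (∑ t ∈ Finset.range (m + 1), A t * kravchuk m T.card t) /
          (m.choose T.card : ℝ)) :=
  junta_fourier_coefficients_general m M A S hS T
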